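/- Let h,k be nonnegative integers and set m=h+k. Then the following identity holds in ℚ^π(q): (−1)^k·π^{mk+C(k+1,2)}·q^{hk+k} = Σ_{a,b,c≥0, a−b+c=h−k} (−1)^b·π^{b(c+k)+C(b+1,2)+c+c(h−k)}·q^{−ac+b}·[c+k choose c]_{q,π}·[a+k choose b]_{q,π}·[h choose a]_{q,π}, where the sum on the right has only finitely many nonzero terms (since [h choose a]_{q,π}=0 for a>h and [a+k choose b]_{q,π}=0 for b>a+k). -/

import Mathlib

/-!
Put `⟨m⟩ = r ^ m - s ^ m` and let `[n choose k]` be the corresponding `(r, s)`-binomial over a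
field; the `(q, π)`-binomials are the case `r = πq`, `s = q⁻¹`. Since `ℚ^π(q) ≅ ℚ(q) × ℚ(q)` via
`π ↦ (1, -1)`, it suffices to prove the identity in a field with `π ^ 2 = 1`, where exponents of `π`
only matter modulo `2`.

For fixed `a` the constraint forces `c = h - k - a + b`, and the symmetry
`[c+k choose c] = [c+k choose k]` turns the sum over `b, c` into a monomial times
`[h choose a] · S(a+k, k, h-a)`, where
`S(n, k, d) = Σ_b (-1)^b r^C(b+1,2) s^C(b,2) / (r^(bn) s^(bk)) [n choose b] [d+b choose k]`
is an `n`-th `(r, s)`-difference of `b ↦ [d+b choose k]`. Pascal's rule in both binomials gives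
`S(n+1, 0, d) = 0` and `S(n+1, k+1, d) = -r^d / (r^k s^(k+1)) · S(n, k, d)`, so `S(n, k, d)`
vanishes for `n > k` and `S(k, k, d)` is a monomial. Only `a = 0` survives, giving the left side.
-/

set_option synthInstance.maxHeartbeats 1000000
set_option maxHeartbeats 2000000

noncomputable section

abbrev Rq : Type := RatFunc ℚ × RatFunc ℚ

def qq : Rq := (RatFunc.X, RatFunc.X)

def pp : Rq := (1, -1)

def C2 (n : ℤ) : ℤ := n * (n - 1) / 2

def qint (Q P : Rq) (n : ℤ) : Rq := ((P * Q) ^ n - Q ^ (-n)) / (P * Q - Q⁻¹)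

def qfac (Q P : Rq) : ℕ → Rq
  | 0 => 1
  | n + 1 => qfac Q P n * qint Q P (n + 1)

def qbinom (Q P : Rq) (n : ℤ) (k : ℕ) : Rq :=
  (∏ l ∈ Finset.range k, ((P * Q) ^ (n - l) - Q ^ (-(n - (l : ℤ))))) /
    (∏ l ∈ Finset.range k, ((P * Q) ^ ((l : ℤ) + 1) - Q ^ (-((l : ℤ) + 1))))

open Finset

lemma Nat.succ_choose_two (b : ℕ) : (b + 1).choose 2 = b.choose 2 + b := by
  simp [Nat.choose_succ_succ, add_comm]

section QBinomial

variable {K : Type*} [Field K] (r s : K)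

def qNum (m : ℤ) : K := r ^ m - s ^ m

def qFac (n : ℕ) : K := ∏ l ∈ range n, qNum r s (l + 1)

def qChoose (n : ℤ) (k : ℕ) : K := (∏ l ∈ range k, qNum r s (n - l)) / qFac r s k

@[simp]
lemma qChoose_zero_right (n : ℤ) : qChoose r s n 0 = 1 := by
  simp [qChoose, qFac]

lemma qChoose_eq_zero_of_lt {n : ℤ} {k : ℕ} (hn : 0 ≤ n) (hk : n < k) :
    qChoose r s n k = 0 := by
  rw [qChoose, prod_eq_zero (mem_range.2 (by omega : n.toNat < k)) (by simp [qNum, hn]),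
    zero_div]

variable {r s} (hrs : ∀ m : ℕ, 0 < m → r ^ m ≠ s ^ m)
include hrs

lemma qNum_ne_zero {m : ℤ} (hm : 0 < m) :
    qNum r s m ≠ 0 := by
  lift m to ℕ using hm.le
  simpa [qNum, sub_eq_zero] using hrs m (by omega)

lemma qFac_ne_zero (n : ℕ) : qFac r s n ≠ 0 :=
  prod_ne_zero_iff.2 fun _ _ => qNum_ne_zero hrs (by omega)

lemma qChoose_succ_right (n : ℤ) (k : ℕ) :
    qChoose r s n (k + 1) = qChoose r s n k * qNum r s (n - k) / qNum r s (k + 1) := by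
  have := qNum_ne_zero hrs (m := k + 1) (by omega)
  simp only [qChoose, qFac, prod_range_succ]
  field_simp

lemma qChoose_succ_succ (n : ℤ) (k : ℕ) :
    qChoose r s (n + 1) (k + 1) = qNum r s (n + 1) / qNum r s (k + 1) * qChoose r s n k := by
  have := qNum_ne_zero hrs (m := k + 1) (by omega)
  have hnum : ∏ l ∈ range (k + 1), qNum r s (n + 1 - l) =
      qNum r s (n + 1) * ∏ l ∈ range k, qNum r s (n - l) := by
    rw [prod_range_succ', mul_comm]
    push_cast
    simp only [sub_zero, add_sub_add_right_eq_sub]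
  rw [qChoose, qChoose, hnum]
  simp only [qFac, prod_range_succ]
  field_simp

lemma qChoose_pascal (hr : r ≠ 0) (hs : s ≠ 0) (n k : ℕ) :
    qChoose r s ((n : ℤ) + 1) (k + 1) =
      r ^ n / r ^ k * qChoose r s n k + s ^ (k + 1) * qChoose r s n (k + 1) := by
  have hk := qNum_ne_zero hrs (m := k + 1) (by omega)
  have hnum : qNum r s (n + 1) =
      r ^ n / r ^ k * qNum r s (k + 1) + s ^ (k + 1) * qNum r s (n - k) := by
    simp only [qNum, zpow_add₀ hr, zpow_add₀ hs, zpow_sub₀ hr, zpow_sub₀ hs, zpow_natCast,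
      zpow_one]
    field_simp
    ring
  rw [qChoose_succ_succ hrs, qChoose_succ_right hrs, hnum]
  field_simp

lemma qChoose_add_eq_qFac_div (n k : ℕ) :
    qChoose r s ((n : ℤ) + k) k = qFac r s (n + k) / (qFac r s n * qFac r s k) := by
  induction k with
  | zero =>
    rw [qChoose_zero_right, eq_div_iff (mul_ne_zero (qFac_ne_zero hrs n) (qFac_ne_zero hrs 0))]
    simp [qFac]
  | succ k ih =>
    have hn := qFac_ne_zero hrs n
    have hk := qFac_ne_zero hrs k
    rw [show ((n : ℤ) + ↑(k + 1)) = (n + k : ℤ) + 1 by push_cast; ring, qChoose_succ_succ hrs,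
      ih]
    simp only [qFac, ← add_assoc, prod_range_succ]
    field_simp
    push_cast
    ring_nf

lemma qChoose_symm (c k : ℕ) :
    qChoose r s ((c : ℤ) + k) c = qChoose r s ((c : ℤ) + k) k := by
  rw [qChoose_add_eq_qFac_div hrs, add_comm (c : ℤ), qChoose_add_eq_qFac_div hrs, add_comm k,
    mul_comm]

end QBinomial

section AltSum

variable {K : Type*} [Field K] {r s : K}

variable (r s) in
def altWeight (n k b : ℕ) : K :=
  (-1) ^ b * (r ^ (b + 1).choose 2 * s ^ b.choose 2 / (r ^ (b * n) * s ^ (b * k)))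

variable (r s) in
def altTerm (n k d b : ℕ) : K :=
  altWeight r s n k b * qChoose r s n b * qChoose r s ((d : ℤ) + b) k

variable (r s) in
def altSum (n k d : ℕ) : K :=
  ∑ b ∈ range (n + 1), altTerm r s n k d b

lemma altSum_zero_left (k d : ℕ) : altSum r s 0 k d = qChoose r s d k := by
  simp [altSum, altTerm, altWeight]

variable (hr : r ≠ 0) (hs : s ≠ 0) (hrs : ∀ m : ℕ, 0 < m → r ^ m ≠ s ^ m)
include hr hs

lemma altWeight_succ_mul_add (n k b : ℕ) :
    altWeight r s (n + 1) k (b + 1) * (r ^ n / r ^ b) * s ^ k +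
      altWeight r s (n + 1) k b * s ^ b = 0 := by
  simp only [altWeight, Nat.succ_choose_two]
  field_simp
  ring

lemma altWeight_succ_succ_mul (n k b d : ℕ) :
    altWeight r s (n + 1) (k + 1) (b + 1) * (r ^ n / r ^ b) * (r ^ (d + b) / r ^ k) =
      -(r ^ d / (r ^ k * s ^ (k + 1))) * altWeight r s n k b := by
  simp only [altWeight, Nat.succ_choose_two]
  field_simp
  ring

include hrs

lemma sum_mul_qChoose_succ (g : ℕ → K) (n : ℕ) :
    ∑ b ∈ range (n + 2), g b * qChoose r s ((n + 1 : ℕ) : ℤ) b =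
      ∑ b ∈ range (n + 1), qChoose r s n b * (g (b + 1) * (r ^ n / r ^ b) + g b * s ^ b) := by
  have htop : qChoose r s n (n + 1) = 0 := qChoose_eq_zero_of_lt r s (by omega) (by omega)
  have hshift : ∑ b ∈ range (n + 1), g (b + 1) * (s ^ (b + 1) * qChoose r s n (b + 1)) + g 0 =
      ∑ b ∈ range (n + 1), qChoose r s n b * (g b * s ^ b) := by
    rw [sum_range_succ, htop, sum_range_succ' _ n]
    simp only [mul_zero, add_zero, qChoose_zero_right, pow_zero, mul_one, one_mul]
    exact congrArg (· + g 0) (sum_congr rfl fun b _ => by ring)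
  simp only [Nat.cast_add, Nat.cast_one, sum_range_succ' _ (n + 1), qChoose_pascal hrs hr hs,
    qChoose_zero_right, mul_one, mul_add, sum_add_distrib, add_assoc]
  rw [hshift]
  exact congrArg (· + _) (sum_congr rfl fun b _ => by ring)

lemma altSum_succ_zero (n d : ℕ) : altSum r s (n + 1) 0 d = 0 := by
  simp only [altSum, altTerm, qChoose_zero_right, mul_one]
  rw [sum_mul_qChoose_succ hr hs hrs]
  refine sum_eq_zero fun b _ => ?_
  rw [← mul_one (_ * (r ^ n / r ^ b)), ← pow_zero s, altWeight_succ_mul_add hr hs, mul_zero]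

lemma altSum_succ_succ (n k d : ℕ) :
    altSum r s (n + 1) (k + 1) d = -(r ^ d / (r ^ k * s ^ (k + 1))) * altSum r s n k d := by
  simp only [altSum, altTerm, mul_sum, mul_right_comm _ (qChoose r s ((n + 1 : ℕ) : ℤ) _)]
  rw [sum_mul_qChoose_succ hr hs hrs]
  refine sum_congr rfl fun b _ => ?_
  have hpascal := qChoose_pascal hrs hr hs (d + b) k
  push_cast at hpascal ⊢
  rw [← add_assoc, hpascal]
  linear_combination (qChoose r s n b * qChoose r s ((d : ℤ) + b) (k + 1)) *
      altWeight_succ_mul_add hr hs n (k + 1) b +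
    (qChoose r s n b * qChoose r s ((d : ℤ) + b) k) * altWeight_succ_succ_mul hr hs n k b d

lemma altSum_eq_zero_of_lt {n k : ℕ} (h : k < n) (d : ℕ) : altSum r s n k d = 0 := by
  induction k generalizing n with
  | zero =>
    obtain ⟨n, rfl⟩ := Nat.exists_eq_add_of_lt h
    exact altSum_succ_zero hr hs hrs _ d
  | succ k ih =>
    obtain ⟨n, rfl⟩ := Nat.exists_eq_add_of_lt h
    rw [show k + 1 + n + 1 = (k + n + 1) + 1 by ring, altSum_succ_succ hr hs hrs,
      ih (by omega), mul_zero]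

lemma altSum_self (k d : ℕ) :
    altSum r s k k d = (-1) ^ k * r ^ (k * d) / (r ^ k.choose 2 * s ^ (k + 1).choose 2) := by
  induction k with
  | zero => simp [altSum_zero_left]
  | succ k ih =>
    rw [altSum_succ_succ hr hs hrs, ih]
    simp only [Nat.succ_choose_two]
    field_simp
    ring

end AltSum

section Star

variable {K : Type*} [Field K] {p q : K}

lemma zpow_eq_zpow_of_even_sub (hp : p ^ 2 = 1) {m n : ℤ} (h : Even (m - n)) : p ^ m = p ^ n := by
  obtain ⟨j, hj⟩ := h
  have hp0 : p ≠ 0 := by rintro rfl; simp at hp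
  rw [show m = n + 2 * j by omega, zpow_add₀ hp0, zpow_mul, zpow_ofNat, hp, one_zpow, mul_one]

lemma mul_pow_div_eq_zpow (hp : p ≠ 0) (hq : q ≠ 0) (a b c d : ℕ) :
    (p * q) ^ a * q⁻¹ ^ b / ((p * q) ^ c * q⁻¹ ^ d) =
      p ^ ((a : ℤ) - c) * q ^ ((a : ℤ) + d - b - c) := by
  simp only [zpow_sub₀ hp, zpow_sub₀ hq, zpow_add₀ hq, zpow_natCast, inv_pow]
  field_simp
  ring

variable (p q) in
def starTerm (h k a b c : ℕ) : K :=
  (-1 : K) ^ b *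
    p ^ ((b * (c + k) + (b + 1).choose 2 + c : ℤ) + (c : ℤ) * ((h : ℤ) - k)) *
    q ^ (-(a : ℤ) * c + b) *
    qChoose (p * q) q⁻¹ ((c : ℤ) + k) c *
    qChoose (p * q) q⁻¹ ((a : ℤ) + k) b *
    qChoose (p * q) q⁻¹ (h : ℤ) a

variable (hp : p ^ 2 = 1) (hq : q ≠ 0) (hpq : ∀ m : ℕ, 0 < m → (p * q) ^ m ≠ q⁻¹ ^ m)
include hp hq hpq

lemma starTerm_eq {h k a b c : ℕ} (ha : a ≤ h) (hc : (a : ℤ) - b + c = h - k) :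
    starTerm p q h k a b c =
      p ^ ((a : ℤ) * (1 + h - k)) * q ^ (-(a : ℤ) * (h - k - a)) *
        altTerm (p * q) q⁻¹ (a + k) k (h - a) b * qChoose (p * q) q⁻¹ h a := by
  have hp0 : p ≠ 0 := by rintro rfl; simp at hp
  have hsymm : qChoose (p * q) q⁻¹ ((c : ℤ) + k) c =
      qChoose (p * q) q⁻¹ (((h - a : ℕ) : ℤ) + b) k := by
    rw [qChoose_symm hpq]
    congr 1
    omega
  have hchoose : (((b + 1).choose 2 : ℕ) : ℤ) = (b.choose 2 : ℕ) + b := by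
    rw [Nat.succ_choose_two]; push_cast; ring
  have hF : -(a : ℤ) * c + b = -(a : ℤ) * (h - k - a) +
      ((((b + 1).choose 2 : ℕ) : ℤ) + ((b * k : ℕ) : ℤ) - ((b.choose 2 : ℕ) : ℤ) -
        ((b * (a + k) : ℕ) : ℤ)) := by
    push_cast
    linear_combination (-(a : ℤ)) * hc - hchoose
  rw [starTerm, altTerm, altWeight, mul_pow_div_eq_zpow hp0 hq, hsymm, hF,
    zpow_eq_zpow_of_even_sub hp
      (n := (a : ℤ) * (1 + h - k) + (((b + 1).choose 2 : ℕ) - ((b * (a + k) : ℕ) : ℤ))) ?_,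
    zpow_add₀ hp0, zpow_add₀ hq]
  · push_cast
    ring
  have hpar : Even (2 * ((b : ℤ) * h - a * (1 + h - k)) + b * (b + 1) + (h - k) * (h - k + 1)) :=
    ((even_two_mul _).add (Int.even_mul_succ_self _)).add (Int.even_mul_succ_self _)
  convert hpar using 2
  push_cast
  linear_combination (b + 1 + (h : ℤ) - k) * hc

lemma sum_ite_starTerm {h k a : ℕ} (ha : a ≤ h) (b : ℕ) :
    ∑ c ∈ range (h + 1), (if (a : ℤ) - b + c = h - k then starTerm p q h k a b c else 0) =
      p ^ ((a : ℤ) * (1 + h - k)) * q ^ (-(a : ℤ) * (h - k - a)) *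
        altTerm (p * q) q⁻¹ (a + k) k (h - a) b * qChoose (p * q) q⁻¹ h a := by
  rcases lt_or_ge ((h : ℤ) - k - a + b) 0 with hneg | hnonneg
  · have hz : qChoose (p * q) q⁻¹ (((h - a : ℕ) : ℤ) + b) k = 0 :=
      qChoose_eq_zero_of_lt _ _ (by omega) (by omega)
    rw [sum_eq_zero fun c _ => if_neg (by omega), altTerm, hz]
    simp
  obtain ⟨c, hc⟩ : ∃ c : ℕ, (c : ℤ) = h - k - a + b :=
    ⟨_, Int.toNat_of_nonneg hnonneg⟩
  rw [sum_congr rfl fun c' _ => if_congr (show _ ↔ c' = c by omega) rfl rfl, sum_ite_eq']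
  by_cases hch : c ≤ h
  · rw [if_pos (mem_range.2 (by omega)), starTerm_eq hp hq hpq ha (by omega)]
  · rw [if_neg (by rw [mem_range]; omega), altTerm,
      qChoose_eq_zero_of_lt _ _ (by positivity) (by push_cast; omega)]
    simp

lemma sum_starTerm_of_le {h k a : ℕ} (ha : a ≤ h) :
    ∑ x ∈ range (h + k + 1) ×ˢ range (h + 1),
        (if (a : ℤ) - x.1 + x.2 = h - k then starTerm p q h k a x.1 x.2 else 0) =
      p ^ ((a : ℤ) * (1 + h - k)) * q ^ (-(a : ℤ) * (h - k - a)) *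
        altSum (p * q) q⁻¹ (a + k) k (h - a) * qChoose (p * q) q⁻¹ h a := by
  rw [sum_product, sum_congr rfl fun b _ => sum_ite_starTerm hp hq hpq ha b, ← sum_mul,
    ← mul_sum, altSum]
  congr 2
  refine (sum_subset (range_subset_range.2 (by omega)) fun b _ hb => ?_).symm
  rw [altTerm, qChoose_eq_zero_of_lt _ _ (by positivity) (by simp at hb; push_cast; omega)]
  simp

theorem star_identity_of_sq_eq_one (h k : ℕ) :
    (-1 : K) ^ k * p ^ ((h + k) * k + (k + 1).choose 2) * q ^ (h * k + k) =
      ∑ t ∈ range (h + 1) ×ˢ range (h + k + 1) ×ˢ range (h + 1),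
        if (t.1 : ℤ) - t.2.1 + t.2.2 = (h : ℤ) - k then starTerm p q h k t.1 t.2.1 t.2.2
        else 0 := by
  have hp0 : p ≠ 0 := by rintro rfl; simp at hp
  have hr : p * q ≠ 0 := mul_ne_zero hp0 hq
  have hs : q⁻¹ ≠ 0 := inv_ne_zero hq
  rw [sum_product,
    sum_congr rfl fun a ha => sum_starTerm_of_le hp hq hpq (Nat.lt_succ_iff.1 (mem_range.1 ha)),
    sum_eq_single_of_mem 0 (by simp) fun a _ ha0 => by
      rw [altSum_eq_zero_of_lt hr hs hpq (by omega : k < a + k)]; simp,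
    zero_add, altSum_self hr hs hpq]
  rw [← zpow_natCast p,
    zpow_eq_zpow_of_even_sub hp (n := ((k * h : ℕ) : ℤ) - (k.choose 2 : ℕ)) ?_,
    zpow_sub₀ hp0, zpow_natCast, zpow_natCast, Nat.succ_choose_two]
  · simp only [CharP.cast_eq_zero, zero_mul, zpow_ofNat, pow_zero, neg_zero, sub_zero, mul_one,
      tsub_zero, inv_pow, one_mul, qChoose_zero_right]
    field_simp
    ring
  have hpar : Even (2 * (k.choose 2 : ℤ) + k * (k + 1)) :=
    (even_two_mul _).add (Int.even_mul_succ_self _)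
  convert hpar using 2
  rw [Nat.succ_choose_two]
  push_cast
  ring

end Star

lemma Prod.fst_zpow {M N : Type*} [DivInvMonoid M] [DivInvMonoid N] (x : M × N) (z : ℤ) :
    (x ^ z).1 = x.1 ^ z := rfl

lemma Prod.snd_zpow {M N : Type*} [DivInvMonoid M] [DivInvMonoid N] (x : M × N) (z : ℤ) :
    (x ^ z).2 = x.2 ^ z := rfl

lemma qbinom_fst (Q P : Rq) (n : ℤ) (k : ℕ) :
    (qbinom Q P n k).1 = qChoose (P.1 * Q.1) Q.1⁻¹ n k := by
  simp only [qbinom, qChoose, qFac, qNum, Prod.fst_div, Prod.fst_prod, Prod.fst_sub, Prod.fst_mul,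
    Prod.fst_zpow, inv_zpow']

lemma qbinom_snd (Q P : Rq) (n : ℤ) (k : ℕ) :
    (qbinom Q P n k).2 = qChoose (P.2 * Q.2) Q.2⁻¹ n k := by
  simp only [qbinom, qChoose, qFac, qNum, Prod.snd_div, Prod.snd_prod, Prod.snd_sub, Prod.snd_mul,
    Prod.snd_zpow, inv_zpow']

lemma qbinom_eq_zero_of_lt (Q P : Rq) {n : ℤ} {k : ℕ} (hn : 0 ≤ n) (hk : n < k) :
    qbinom Q P n k = 0 :=
  Prod.ext (by rw [qbinom_fst, qChoose_eq_zero_of_lt _ _ hn hk]; rfl)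
    (by rw [qbinom_snd, qChoose_eq_zero_of_lt _ _ hn hk]; rfl)

lemma RatFunc.mul_X_pow_ne_X_inv_pow {F : Type*} [Field F] {p : RatFunc F} (hp : p ^ 2 = 1)
    {m : ℕ} (hm : 0 < m) : (p * RatFunc.X) ^ m ≠ RatFunc.X⁻¹ ^ m := by
  intro heq
  have h1 : (RatFunc.X : RatFunc F) ^ (4 * m) = 1 :=
    calc (RatFunc.X : RatFunc F) ^ (4 * m) = ((p * RatFunc.X) ^ m * RatFunc.X ^ m) ^ 2 := by
          rw [← one_mul (RatFunc.X ^ (4 * m)), ← one_pow m, ← hp]; ring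
      _ = 1 := by rw [heq, ← mul_pow, inv_mul_cancel₀ RatFunc.X_ne_zero, one_pow, one_pow]
  have h2 : (Polynomial.X : Polynomial F) ^ (4 * m) = 1 :=
    RatFunc.algebraMap_injective F (by simpa using h1)
  have := congrArg Polynomial.natDegree h2
  simp only [Polynomial.natDegree_pow, Polynomial.natDegree_X, Polynomial.natDegree_one] at this
  omega

/-- The key `(q,π)`-binomial identity (★): for nonnegative integers `h, k` with `m = h + k`,
`(-1)^k π^{mk + C(k+1,2)} q^{hk+k}`
` = Σ_{a-b+c = h-k} (-1)^b π^{b(c+k) + C(b+1,2) + c + c(h-k)} q^{-ac+b} [c+k choose c][a+k choose b][h choose a]`,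
where the sum (a finsum) has only finitely many nonzero terms. -/
theorem qbinom_star_identity (h k : ℕ) :
    (-1 : Rq) ^ k * pp ^ ((h + k) * k + (k + 1).choose 2) * qq ^ (h * k + k) =
      ∑ᶠ t : ℕ × ℕ × ℕ,
        if (t.1 : ℤ) - t.2.1 + t.2.2 = (h : ℤ) - k then
          (-1 : Rq) ^ t.2.1 *
            pp ^ ((t.2.1 * (t.2.2 + k) + (t.2.1 + 1).choose 2 + t.2.2 : ℤ) +
              (t.2.2 : ℤ) * ((h : ℤ) - k)) *
            qq ^ (-(t.1 : ℤ) * t.2.2 + t.2.1) *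
            qbinom qq pp ((t.2.2 : ℤ) + k) t.2.2 *
            qbinom qq pp ((t.1 : ℤ) + k) t.2.1 *
            qbinom qq pp (h : ℤ) t.1
        else 0 := by
  rw [finsum_eq_sum_of_support_subset _
    (s := range (h + 1) ×ˢ range (h + k + 1) ×ˢ range (h + 1))]
  · refine Prod.ext ?_ ?_ <;>
      simp only [Prod.fst_sum, Prod.snd_sum, apply_ite Prod.fst, apply_ite Prod.snd, Prod.fst_mul,
        Prod.snd_mul, Prod.pow_fst, Prod.pow_snd, Prod.fst_neg, Prod.snd_neg, Prod.fst_one,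
        Prod.snd_one, Prod.fst_zero, Prod.snd_zero, qbinom_fst, qbinom_snd] <;>
      exact star_identity_of_sq_eq_one (by simp [pp]) RatFunc.X_ne_zero
        (fun _ hm => RatFunc.mul_X_pow_ne_X_inv_pow (by simp [pp]) hm) h k
  -- A nonzero term has `a ≤ h` and `b ≤ a + k`, hence `c = h - k - a + b ≤ h`.
  · rintro ⟨a, b, c⟩ ht
    contrapose! ht
    simp only [coe_product, coe_range, Set.mem_prod, Set.mem_Iio, not_and_or, not_lt] at ht
    rw [Function.notMem_support]
    dsimp only
    split_ifs with hc
    · rcases (by omega : h < a ∨ a + k < b) with ha | hb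
      · rw [qbinom_eq_zero_of_lt qq pp (n := h) (by positivity) (by exact_mod_cast ha), mul_zero]
      · rw [qbinom_eq_zero_of_lt qq pp (n := a + k) (by positivity) (by exact_mod_cast hb),
          mul_zero, zero_mul]
    · rfl
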